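/- arXiv:2011.04005 — 2 statements merged into one kernel-verified Lean document; each statement's English description precedes it below -/
import Mathlib

section
/- A finite mixture of exponential distributions has a decreasing failure rate: if F is the CDF with density f(x) = Σ_{i=1}^n p_i γ_i e^{-γ_i x} (p_i > 0, Σ p_i = 1, γ_i > 0), then the hazard rate r(x) = f(x)/(1 - F(x)) is nonincreasing in x on (0,∞). -/
lemma aux_exp_sign (a b x y : ℝ) (hxy : x ≤ y) :
    0 ≤ (a - b) * (Real.exp (-a * x) * Real.exp (-b * y)
        - Real.exp (-a * y) * Real.exp (-b * x)) := by
  rw [← Real.exp_add, ← Real.exp_add]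
  rcases le_total a b with h | h
  · have hle : Real.exp (-a * x + -b * y) ≤ Real.exp (-a * y + -b * x) :=
      Real.exp_le_exp.mpr (by nlinarith)
    nlinarith
  · have hle : Real.exp (-a * y + -b * x) ≤ Real.exp (-a * x + -b * y) :=
      Real.exp_le_exp.mpr (by nlinarith)
    nlinarith

theorem stmt_1 (n : ℕ) (p γ : Fin n → ℝ)
    (hp : ∀ i, 0 < p i) (hsum : ∑ i, p i = 1) (hγ : ∀ i, 0 < γ i)
    (f F : ℝ → ℝ)
    (hf : ∀ x, f x = ∑ i, p i * (γ i * Real.exp (-(γ i) * x)))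
    (hF : ∀ x, F x = ∑ i, p i * (1 - Real.exp (-(γ i) * x))) :
    ∀ x y : ℝ, 0 < x → x ≤ y →
      f y / (1 - F y) ≤ f x / (1 - F x) := by
  intro x y hx hxy
  have hn0 : n ≠ 0 := by rintro rfl; simp at hsum
  have : Nonempty (Fin n) := ⟨⟨0, Nat.pos_of_ne_zero hn0⟩⟩
  have hS : ∀ t : ℝ, 1 - F t = ∑ i, p i * Real.exp (-(γ i) * t) := by
    intro t
    rw [hF]
    simp only [mul_sub, mul_one]
    rw [Finset.sum_sub_distrib, hsum]
    ring
  have hSpos : ∀ t : ℝ, 0 < ∑ i, p i * Real.exp (-(γ i) * t) := fun t =>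
    Finset.sum_pos (fun i _ => mul_pos (hp i) (Real.exp_pos _)) Finset.univ_nonempty
  rw [hf, hf, hS, hS, div_le_div_iff₀ (hSpos y) (hSpos x)]
  set D : Fin n → Fin n → ℝ := fun i j =>
    p i * (γ i * Real.exp (-(γ i) * x)) * (p j * Real.exp (-(γ j) * y))
      - p i * (γ i * Real.exp (-(γ i) * y)) * (p j * Real.exp (-(γ j) * x)) with hD
  have key : 0 ≤ ∑ i, ∑ j, D i j := by
    have hswap : (∑ i, ∑ j, D i j) = ∑ i, ∑ j, D j i := Finset.sum_comm
    have h2 : 0 ≤ ∑ i, ∑ j, (D i j + D j i) := by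
      refine Finset.sum_nonneg fun i _ => Finset.sum_nonneg fun j _ => ?_
      have := aux_exp_sign (γ i) (γ j) x y hxy
      have hpp : 0 ≤ p i * p j := le_of_lt (mul_pos (hp i) (hp j))
      have : 0 ≤ p i * p j * ((γ i - γ j) *
          (Real.exp (-(γ i) * x) * Real.exp (-(γ j) * y)
            - Real.exp (-(γ i) * y) * Real.exp (-(γ j) * x))) :=
        mul_nonneg hpp (by simpa using aux_exp_sign (γ i) (γ j) x y hxy)
      calc (0:ℝ) ≤ _ := this
        _ = D i j + D j i := by simp only [hD]; ring
    have hsplit : (∑ i, ∑ j, (D i j + D j i))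
        = (∑ i, ∑ j, D i j) + ∑ i, ∑ j, D j i := by
      simp [Finset.sum_add_distrib]
    rw [hsplit, ← hswap] at h2
    linarith
  have hexp : (∑ i, ∑ j, D i j)
      = (∑ i, p i * (γ i * Real.exp (-(γ i) * x))) * (∑ j, p j * Real.exp (-(γ j) * y))
        - (∑ i, p i * (γ i * Real.exp (-(γ i) * y))) * (∑ j, p j * Real.exp (-(γ j) * x)) := by
    rw [Finset.sum_mul_sum, Finset.sum_mul_sum, ← Finset.sum_sub_distrib]
    exact Finset.sum_congr rfl fun i _ => by rw [← Finset.sum_sub_distrib]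
  linarith [hexp ▸ key]
end

section
/- If a probability density f on (0,∞) is completely monotone and its associated survival function S(x) = ∫_x^∞ f(t) dt is positive, then the distribution is DFR: the hazard rate r(x) = f(x)/S(x) is nonincreasing on (0,∞). (It suffices to show r'(x) ≤ 0, i.e., f'(x)S(x) + f(x)² ≤ 0, using the Cauchy–Schwarz-type inequality valid for completely monotone f.) -/
open MeasureTheory
open Finset Filter Set


noncomputable def Dop (b : ℕ → ℝ) : ℕ → ℝ := fun i => b i - b (i + 1)

lemma Dop_shift : ∀ (m : ℕ) (b : ℕ → ℝ),
    Dop^[m] (fun i => b (i + 1)) = fun i => Dop^[m] b (i + 1) := by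
  intro m
  induction m with
  | zero => intro b; simp
  | succ m ih =>
    intro b
    rw [Function.iterate_succ_apply, Function.iterate_succ_apply]
    have h1 : Dop (fun i => b (i + 1)) = fun i => (Dop b) (i + 1) := by
      funext i; simp [Dop]
    rw [h1, ih (Dop b)]

lemma key_id : ∀ (N : ℕ) (b : ℕ → ℝ),
    ∑ j ∈ range (N + 1), (N.choose j : ℝ) * Dop^[N - j] b j = b 0 := by
  intro N
  induction N with
  | zero => intro b; simp
  | succ N ih =>
    intro b
    rw [Finset.sum_range_succ']
    have e1 : ∀ i ∈ range (N + 1),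
        ((N+1).choose (i+1) : ℝ) * Dop^[N + 1 - (i+1)] b (i+1)
        = (N.choose i : ℝ) * Dop^[N - i] b (i+1)
          + (N.choose (i+1) : ℝ) * Dop^[N - i] b (i+1) := by
      intro i _
      rw [Nat.choose_succ_succ, Nat.succ_sub_succ]
      push_cast
      ring
    rw [Finset.sum_congr rfl e1, Finset.sum_add_distrib]
    have hA : ∑ i ∈ range (N + 1), (N.choose i : ℝ) * Dop^[N - i] b (i+1) = b 1 := by
      have h := ih (fun i => b (i + 1))
      simp only [Dop_shift] at h
      exact h
    have hB : ∑ i ∈ range (N + 1), (N.choose (i+1) : ℝ) * Dop^[N - i] b (i+1)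
        + ((N+1).choose 0 : ℝ) * Dop^[N + 1 - 0] b 0 = b 0 - b 1 := by
      have h := ih (Dop b)
      rw [Finset.sum_range_succ'] at h
      have e2 : ∀ i ∈ range N,
          (N.choose (i+1) : ℝ) * Dop^[N - (i+1)] (Dop b) (i+1)
          = (N.choose (i+1) : ℝ) * Dop^[N - i] b (i+1) := by
        intro i hi
        rw [Finset.mem_range] at hi
        have : N - i = (N - (i+1)) + 1 := by omega
        rw [this, Function.iterate_succ_apply]
      rw [Finset.sum_congr rfl e2] at h
      have e3 : (N.choose 0 : ℝ) * Dop^[N - 0] (Dop b) 0 = Dop^[N+1] b 0 := by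
        rw [Function.iterate_succ_apply]; simp
      rw [e3] at h
      have e4 : ∑ i ∈ range (N + 1), (N.choose (i+1) : ℝ) * Dop^[N - i] b (i+1)
          = ∑ i ∈ range N, (N.choose (i+1) : ℝ) * Dop^[N - i] b (i+1) := by
        rw [Finset.sum_range_succ]
        simp [Nat.choose_succ_self]
      rw [e4]
      have : Dop b 0 = b 0 - b 1 := rfl
      rw [this] at h
      simpa using h
    rw [add_assoc, hA, add_comm (b 1), hB]
    ring

lemma idB (N : ℕ) (b : ℕ → ℝ) :
    ∑ k ∈ range (N + 2), ((N+1).choose k : ℝ) * ((k : ℝ) / (N+1)) * Dop^[N + 1 - k] b k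
      = b 1 := by
  rw [Finset.sum_range_succ']
  have e1 : ∀ i ∈ range (N + 1),
      ((N+1).choose (i+1) : ℝ) * (((i+1 : ℕ) : ℝ) / (N+1)) * Dop^[N + 1 - (i+1)] b (i+1)
      = (N.choose i : ℝ) * Dop^[N - i] b (i+1) := by
    intro i _
    rw [Nat.succ_sub_succ]
    have hn : ((N:ℝ)+1) ≠ 0 := by positivity
    have hc : ((N+1).choose (i+1) : ℝ) * ((i:ℝ)+1) = ((N:ℝ)+1) * (N.choose i : ℝ) := by
      have := Nat.add_one_mul_choose_eq N i
      have h2 : ((N.succ * N.choose i : ℕ) : ℝ) = ((N.succ.choose i.succ * i.succ : ℕ) : ℝ) := by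
        exact congrArg (Nat.cast : ℕ → ℝ) this
      push_cast at h2
      push_cast
      linarith
    field_simp
    push_cast
    linear_combination Dop^[N - i] b (i + 1) * hc
  rw [Finset.sum_congr rfl e1]
  have h := key_id N (fun i => b (i + 1))
  simp only [Dop_shift] at h
  simpa using h

lemma idC (N : ℕ) (b : ℕ → ℝ) :
    ∑ k ∈ range (N + 3), ((N+2).choose k : ℝ) *
        (((k : ℝ) * ((k : ℝ) - 1)) / (((N:ℝ)+2) * ((N:ℝ)+1))) * Dop^[N + 2 - k] b k
      = b 2 := by
  rw [Finset.sum_range_succ']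
  rw [Finset.sum_range_succ']
  have e1 : ∀ i ∈ range (N + 1),
      ((N+2).choose (i+1+1) : ℝ) *
        ((((i+1+1 : ℕ) : ℝ)) * (((i+1+1 : ℕ) : ℝ) - 1) / (((N:ℝ)+2) * ((N:ℝ)+1)))
          * Dop^[N + 2 - (i+1+1)] b (i+1+1)
      = (N.choose i : ℝ) * Dop^[N - i] b (i+2) := by
    intro i _
    have h2 : N + 2 - (i+1+1) = N - i := by omega
    rw [h2]
    have key : ((N+2).choose (i+2) : ℝ) * ((i:ℝ)+2) * ((i:ℝ)+1)
        = ((N:ℝ)+2) * ((N:ℝ)+1) * (N.choose i : ℝ) := by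
      have g1 := Nat.add_one_mul_choose_eq (N+1) (i+1)
      have g2 := Nat.add_one_mul_choose_eq N i
      have g1' : (((N+1).succ * (N+1).choose (i+1) : ℕ) : ℝ)
          = (((N+1).succ.choose (i+1).succ * (i+1).succ : ℕ) : ℝ) := by exact congrArg (Nat.cast : ℕ → ℝ) g1
      have g2' : ((N.succ * N.choose i : ℕ) : ℝ)
          = ((N.succ.choose i.succ * i.succ : ℕ) : ℝ) := by exact congrArg (Nat.cast : ℕ → ℝ) g2
      push_cast at g1' g2'
      nlinarith [g1', g2']
    have hn : (((N:ℝ)+2) * ((N:ℝ)+1)) ≠ 0 := by positivity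
    field_simp
    push_cast
    linear_combination Dop^[N - i] b (i + 2) * key
  rw [Finset.sum_congr rfl e1]
  have h := key_id N (fun i => b (i + 2))
  have hsh : ∀ m, Dop^[m] (fun i => b (i + 2)) = fun i => Dop^[m] b (i + 2) := by
    intro m
    have h1 := Dop_shift m (fun i => b (i+1))
    have h2 := Dop_shift m b
    rw [h2] at h1
    calc Dop^[m] (fun i => b (i + 2)) = Dop^[m] (fun i => (fun j => b (j+1)) (i + 1)) := rfl
    _ = fun i => Dop^[m] b (i + 2) := by rw [h1]
  simp only [hsh] at h
  simp only [Nat.cast_zero, Nat.cast_one]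
  rw [show ((0:ℝ) : ℝ) = 0 from rfl] at *
  simpa using h

lemma discrete_cs (b : ℕ → ℝ) (hb : ∀ j i, 0 ≤ Dop^[j] b i) :
    (b 1) ^ 2 ≤ b 0 * b 2 := by
  have main : ∀ N : ℕ, (b 1) ^ 2 ≤
      b 0 * (b 2 + ((b 1 - b 2) / ((N:ℝ) + 2))) := by
    intro N
    set n : ℕ := N + 2 with hn
    have hnR : ((n:ℝ)) = (N:ℝ) + 2 := by push_cast [hn]; ring
    have hnpos : (0:ℝ) < (n:ℝ) := by rw [hnR]; positivity
    set p : ℕ → ℝ := fun k => ((n).choose k : ℝ) * Dop^[n - k] b k with hp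
    have hppos : ∀ k, 0 ≤ p k := by
      intro k
      exact mul_nonneg (by positivity) (hb _ _)
    have s0 : ∑ k ∈ range (n + 1), p k = b 0 := by
      have := key_id n b
      simpa [hp] using this
    have s1 : ∑ k ∈ range (n + 1), p k * ((k:ℝ)/(n:ℝ)) = b 1 := by
      have := idB (N + 1) b
      rw [show N + 1 + 2 = n + 1 from rfl] at this
      rw [← this]
      apply Finset.sum_congr rfl
      intro k _
      rw [hp]
      rw [show N + 1 + 1 - k = n - k from rfl, hnR]
      push_cast
      ring
    have s2 : ∑ k ∈ range (n + 1), p k * (((k:ℝ) * ((k:ℝ) - 1)) / ((n:ℝ) * ((n:ℝ) - 1))) = b 2 := by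
      have := idC N b
      rw [show N + 3 = n + 1 from rfl] at this
      rw [← this]
      apply Finset.sum_congr rfl
      intro k _
      rw [hp, show N + 2 - k = n - k from rfl, hnR]
      push_cast
      rw [hn]; ring
    -- Cauchy-Schwarz
    have cs : (∑ k ∈ range (n+1), p k * ((k:ℝ)/(n:ℝ))) ^ 2 ≤
        (∑ k ∈ range (n+1), p k) * (∑ k ∈ range (n+1), p k * ((k:ℝ)/(n:ℝ))^2) := by
      have h := Finset.sum_mul_sq_le_sq_mul_sq (range (n+1))
        (fun k => Real.sqrt (p k)) (fun k => Real.sqrt (p k) * ((k:ℝ)/(n:ℝ)))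
      have e1 : ∀ k ∈ range (n+1),
          Real.sqrt (p k) * (Real.sqrt (p k) * ((k:ℝ)/(n:ℝ))) = p k * ((k:ℝ)/(n:ℝ)) := by
        intro k _
        rw [← mul_assoc, Real.mul_self_sqrt (hppos k)]
      have e2 : ∀ k ∈ range (n+1), Real.sqrt (p k) ^ 2 = p k := by
        intro k _; exact Real.sq_sqrt (hppos k)
      have e3 : ∀ k ∈ range (n+1),
          (Real.sqrt (p k) * ((k:ℝ)/(n:ℝ)))^2 = p k * ((k:ℝ)/(n:ℝ))^2 := by
        intro k _
        rw [mul_pow, Real.sq_sqrt (hppos k)]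
      rw [Finset.sum_congr rfl e1, Finset.sum_congr rfl e2, Finset.sum_congr rfl e3] at h
      exact h
    have hsplit : ∑ k ∈ range (n+1), p k * ((k:ℝ)/(n:ℝ))^2
        = (((n:ℝ)-1)/(n:ℝ)) * b 2 + b 1 / (n:ℝ) := by
      have e : ∀ k ∈ range (n+1), p k * ((k:ℝ)/(n:ℝ))^2
          = (((n:ℝ)-1)/(n:ℝ)) * (p k * (((k:ℝ)*((k:ℝ)-1))/((n:ℝ)*((n:ℝ)-1)))) +
            (p k * ((k:ℝ)/(n:ℝ)))/(n:ℝ) := by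
        intro k _
        have hn1 : ((n:ℝ) - 1) ≠ 0 := by
          rw [hnR]; intro h; have hN : (0:ℝ) ≤ (N:ℝ) := Nat.cast_nonneg N; linarith
        have hn0 : ((n:ℝ)) ≠ 0 := ne_of_gt hnpos
        field_simp
        ring
      rw [Finset.sum_congr rfl e, Finset.sum_add_distrib, ← Finset.mul_sum,
        ← Finset.sum_div, s1, s2]
    rw [s1, s0, hsplit] at cs
    calc (b 1)^2 ≤ b 0 * ((((n:ℝ)-1)/(n:ℝ)) * b 2 + b 1 / (n:ℝ)) := cs
    _ = b 0 * (b 2 + ((b 1 - b 2) / ((N:ℝ) + 2))) := by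
      rw [← hnR]
      have hn0 : ((n:ℝ)) ≠ 0 := ne_of_gt hnpos
      have hn1 : ((n:ℝ) - 1) ≠ 0 := by
        rw [hnR]; intro h; have hN : (0:ℝ) ≤ (N:ℝ) := Nat.cast_nonneg N; linarith
      rw [div_mul_eq_mul_div, ← add_div, add_div' _ _ _ hn0]
      congr 2; ring
  -- take the limit
  have htend : Tendsto (fun N : ℕ => b 0 * (b 2 + ((b 1 - b 2) / ((N:ℝ) + 2))))
      atTop (nhds (b 0 * (b 2 + 0))) := by
    apply Tendsto.const_mul
    apply Tendsto.const_add
    apply Tendsto.div_atTop tendsto_const_nhds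
    exact tendsto_atTop_add_const_right _ 2 tendsto_natCast_atTop_atTop
  have := ge_of_tendsto' htend main
  simpa using this

lemma discrete_ratio (b : ℕ → ℝ) (hpos : ∀ i, 0 < b i)
    (hlc : ∀ i, (b (i+1)) ^ 2 ≤ b i * b (i+2)) :
    ∀ p q, b p * b q ≤ b 0 * b (p + q) := by
  have hr : Monotone (fun i => b (i+1) / b i) := by
    apply monotone_nat_of_le_succ
    intro i
    rw [div_le_div_iff₀ (hpos i) (hpos (i+1))]
    have := hlc i
    nlinarith [hpos i, hpos (i+1), hpos (i+2)]
  intro p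
  induction p with
  | zero => intro q; simp [le_refl]
  | succ p ih =>
    intro q
    have e1 : (b (p+1) / b p) * b p = b (p+1) :=
      div_mul_cancel₀ _ (ne_of_gt (hpos p))
    have e2 : (b (p+q+1) / b (p+q)) * b (p+q) = b (p+q+1) :=
      div_mul_cancel₀ _ (ne_of_gt (hpos (p+q)))
    have h1 : b (p+1) * b q = (b (p+1) / b p) * (b p * b q) := by
      rw [← mul_assoc, e1]
    have h2 : (b (p+1) / b p) * (b p * b q) ≤ (b (p+1) / b p) * (b 0 * b (p+q)) :=
      mul_le_mul_of_nonneg_left (ih q) (div_nonneg (hpos _).le (hpos _).le)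
    have h3 : (b (p+1) / b p) * (b 0 * b (p+q)) ≤ (b (p+q+1) / b (p+q)) * (b 0 * b (p+q)) :=
      mul_le_mul_of_nonneg_right (hr (Nat.le_add_right p q))
        (mul_nonneg (hpos 0).le (hpos _).le)
    have h4 : (b (p+q+1) / b (p+q)) * (b 0 * b (p+q)) = b 0 * b (p+1+q) := by
      rw [show p+1+q = p+q+1 by omega, mul_left_comm, e2]
    linarith

/-- smooth on `(0,∞)` with alternating global iterated derivatives there -/
def Nice (g : ℝ → ℝ) : Prop :=
  ContDiffOn ℝ (⊤ : ℕ∞) g (Set.Ioi 0) ∧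
  ∀ (k : ℕ), ∀ x ∈ Set.Ioi (0:ℝ), 0 ≤ (-1 : ℝ) ^ k * iteratedDeriv k g x

lemma bridge (g : ℝ → ℝ) (n : ℕ) {x : ℝ} (hx : x ∈ Set.Ioi (0:ℝ)) :
    iteratedDerivWithin n g (Set.Ioi 0) x = iteratedDeriv n g x := by
  rw [iteratedDerivWithin_eq_iteratedFDerivWithin, iteratedDeriv_eq_iteratedFDeriv,
    iteratedFDerivWithin_of_isOpen n isOpen_Ioi hx]

lemma nice_of_cm {g : ℝ → ℝ}
    (h1 : ContDiffOn ℝ (⊤ : ℕ∞) g (Set.Ioi 0))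
    (h2 : ∀ (k : ℕ), ∀ x ∈ Set.Ioi (0:ℝ),
      0 ≤ (-1 : ℝ) ^ k * iteratedDerivWithin k g (Set.Ioi 0) x) : Nice g := by
  refine ⟨h1, fun k x hx => ?_⟩
  rw [← bridge g k hx]
  exact h2 k x hx

lemma nice_antitone_alt {g : ℝ → ℝ} (hg : Nice g) (k : ℕ) :
    AntitoneOn (fun x => (-1:ℝ)^k * iteratedDeriv k g x) (Set.Ioi 0) := by
  have hdiff : DifferentiableOn ℝ (iteratedDeriv k g) (Set.Ioi 0) := by
    have h := hg.1.differentiableOn_iteratedDerivWithin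
      (m := k) (by exact_mod_cast lt_top_iff_ne_top.2 (by simp)) (uniqueDiffOn_Ioi 0)
    exact h.congr (fun x hx => (bridge g k hx).symm)
  have hcont : ContinuousOn (fun x => (-1:ℝ)^k * iteratedDeriv k g x) (Set.Ioi 0) := by
    exact (continuousOn_const.mul hdiff.continuousOn)
  apply antitoneOn_of_deriv_nonpos (convex_Ioi 0) hcont
  · rw [interior_Ioi]
    exact (hdiff.const_smul ((-1:ℝ)^k)).congr (fun x hx => by simp [smul_eq_mul])
  · intro x hx
    rw [interior_Ioi] at hx
    have hdx : DifferentiableAt ℝ (iteratedDeriv k g) x :=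
      hdiff.differentiableAt (isOpen_Ioi.mem_nhds hx)
    rw [deriv_const_mul _ hdx, ← iteratedDeriv_succ]
    have := hg.2 (k+1) x hx
    have e : (-1:ℝ)^(k+1) = -((-1:ℝ)^k) := by ring
    rw [e] at this
    linarith

noncomputable def Phi (h : ℝ) (g : ℝ → ℝ) : ℝ → ℝ := fun x => g x - g (x + h)

lemma nice_step {h : ℝ} (hh : 0 ≤ h) {g : ℝ → ℝ} (hg : Nice g) : Nice (Phi h g) := by
  have hmaps : Set.MapsTo (fun x : ℝ => x + h) (Set.Ioi 0) (Set.Ioi 0) := by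
    intro x hx
    simp only [Set.mem_Ioi] at *
    linarith
  have hcomp : ContDiffOn ℝ (⊤ : ℕ∞) (fun x => g (x + h)) (Set.Ioi 0) :=
    hg.1.comp ((contDiff_id.add contDiff_const).contDiffOn) hmaps
  have hsmooth : ContDiffOn ℝ (⊤ : ℕ∞) (Phi h g) (Set.Ioi 0) := hg.1.sub hcomp
  refine ⟨hsmooth, fun k x hx => ?_⟩
  have e : iteratedDeriv k (Phi h g) x = iteratedDeriv k g x - iteratedDeriv k g (x + h) := by
    have e0 : Phi h g = g - (fun x => g (x + h)) := rfl
    rw [← bridge _ k hx, e0]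
    rw [iteratedDerivWithin_sub hx (uniqueDiffOn_Ioi 0) ((hg.1.contDiffWithinAt hx).of_le (by exact_mod_cast le_top))
      ((hcomp.contDiffWithinAt hx).of_le (by exact_mod_cast le_top))]
    rw [bridge _ k hx, bridge _ k hx]
    have := iteratedDeriv_comp_add_const k g h
    have e2 : iteratedDeriv k (fun z => g (z + h)) x = iteratedDeriv k g (x + h) :=
      congrFun this x
    rw [e2]
  rw [e, mul_sub, sub_nonneg]
  exact nice_antitone_alt hg k hx (hmaps hx) (by linarith)

lemma sample_comm (x h' : ℝ) : ∀ (j : ℕ) (g : ℝ → ℝ),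
    Dop^[j] (fun i : ℕ => g (x + i * h')) = fun i : ℕ => (Phi h')^[j] g (x + i * h') := by
  intro j
  induction j with
  | zero => intro g; simp
  | succ j ih =>
    intro g
    rw [Function.iterate_succ_apply, Function.iterate_succ_apply]
    have e : Dop (fun i : ℕ => g (x + i * h')) = fun i : ℕ => (Phi h' g) (x + i * h') := by
      funext i
      simp only [Dop, Phi]
      have : x + ((i:ℝ) + 1) * h' = x + i * h' + h' := by push_cast; ring
      rw [show ((i+1 : ℕ) : ℝ) = (i:ℝ) + 1 by push_cast; ring, this]
    rw [e, ih (Phi h' g)]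

lemma iter_nice {f : ℝ → ℝ} (hf : Nice f) {h : ℝ} (hh : 0 ≤ h) :
    ∀ j, Nice ((Phi h)^[j] f) := by
  intro j
  induction j with
  | zero => simpa using hf
  | succ j ih =>
    rw [Function.iterate_succ_apply']
    exact nice_step hh ih

lemma midpoint_ineq {f : ℝ → ℝ} (hf : Nice f) {u h' : ℝ} (hu : 0 < u) (hh : 0 < h') :
    f (u + h') ^ 2 ≤ f u * f (u + 2 * h') := by
  have hb : ∀ j i, 0 ≤ Dop^[j] (fun i : ℕ => f (u + i * h')) i := by
    intro j i
    rw [sample_comm u h' j f]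
    have hpt : u + (i:ℝ) * h' ∈ Set.Ioi (0:ℝ) := by
      simp only [Set.mem_Ioi]
      positivity
    have := (iter_nice hf hh.le j).2 0 _ hpt
    simpa using this
  have := discrete_cs (fun i : ℕ => f (u + i * h')) hb
  norm_num at this
  convert this using 3 <;> push_cast <;> ring

lemma grid_ineq {f : ℝ → ℝ} (hf : Nice f) (hfpos : ∀ x > (0:ℝ), 0 < f x)
    {u h' : ℝ} (hu : 0 < u) (hh : 0 < h') (p q : ℕ) :
    f (u + p * h') * f (u + q * h') ≤ f u * f (u + (p + q : ℕ) * h') := by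
  have key := discrete_ratio (fun i : ℕ => f (u + i * h'))
    (fun i => hfpos _ (by positivity))
    (fun i => by
      have := midpoint_ineq hf (u := u + i * h') (h' := h') (by positivity) hh
      convert this using 3 <;> push_cast <;> ring) p q
  simpa using key

lemma rat_point {f : ℝ → ℝ} (hf : Nice f) (hfpos : ∀ x > (0:ℝ), 0 < f x)
    {x y : ℝ} (hx : 0 < x) (hxy : x < y) (r : ℚ) (hr : 0 < r) :
    f y * f (x + r * (y - x)) ≤ f x * f (y + r * (y - x)) := by
  set h : ℝ := y - x with hh
  have hhpos : 0 < h := by simp [hh]; linarith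
  set q : ℕ := r.den with hq
  have hqpos : 0 < (q:ℝ) := by
    have := r.den_pos
    exact_mod_cast this
  set p : ℕ := r.num.toNat with hp
  have hrnum : (0:ℤ) < r.num := Rat.num_pos.mpr hr
  have hpcast : ((p:ℤ)) = r.num := Int.toNat_of_nonneg hrnum.le
  have hrcast : (r : ℝ) = (p : ℝ) / (q : ℝ) := by
    rw [Rat.cast_def]
    congr 1
    · exact_mod_cast hpcast.symm
  have h'pos : 0 < h / q := by positivity
  have key := grid_ineq hf hfpos hx h'pos p q
  have e1 : x + (q:ℝ) * (h / q) = y := by field_simp; rw [hh]; ring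
  have e2 : x + (p:ℝ) * (h / q) = x + r * h := by rw [hrcast]; field_simp
  have e3 : x + ((p + q : ℕ):ℝ) * (h / q) = y + r * h := by
    push_cast
    rw [hrcast]
    field_simp
    ring
  rw [e1, e2, e3] at key
  calc f y * f (x + r * h) = f (x + r * h) * f y := by ring
  _ ≤ f x * f (y + r * h) := key

lemma four_point {f : ℝ → ℝ} (hf : Nice f) (hfpos : ∀ x > (0:ℝ), 0 < f x)
    {x y t : ℝ} (hx : 0 < x) (hxy : x < y) (hyt : y < t) :
    f y * f (t - (y - x)) ≤ f x * f t := by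
  set h : ℝ := y - x with hh
  have hhpos : 0 < h := by simp [hh]; linarith
  set ρ : ℝ := (t - y) / h with hρ
  have hρpos : 0 < ρ := div_pos (by linarith) hhpos
  have hl : ∀ n : ℕ, max (ρ/2) (ρ - 1/((n:ℝ)+1)) < ρ := by
    intro n
    apply max_lt
    · linarith
    · have : 0 < 1/((n:ℝ)+1) := by positivity
      linarith
  choose r hr1 hr2 using fun n => exists_rat_btwn (hl n)
  have hrpos : ∀ n, 0 < r n := by
    intro n
    have h1 : (ρ/2 : ℝ) ≤ max (ρ/2) (ρ - 1/((n:ℝ)+1)) := le_max_left _ _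
    have : (0:ℝ) < (r n : ℝ) := by linarith [hr1 n]
    exact_mod_cast this
  have hrtend : Tendsto (fun n => ((r n : ℝ))) atTop (nhds ρ) := by
    apply tendsto_of_tendsto_of_tendsto_of_le_of_le
      (g := fun n : ℕ => ρ - 1/((n:ℝ)+1)) (h := fun _ : ℕ => ρ)
    · have : Tendsto (fun n : ℕ => 1/((n:ℝ)+1)) atTop (nhds 0) :=
        tendsto_one_div_add_atTop_nhds_zero_nat
      simpa using tendsto_const_nhds.sub this
    · exact tendsto_const_nhds
    · intro n
      have := le_max_right (ρ/2) (ρ - 1/((n:ℝ)+1))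
      linarith [hr1 n]
    · intro n
      linarith [hr2 n]
  have hineq : ∀ n, f y * f (x + (r n) * h) ≤ f x * f (y + (r n) * h) :=
    fun n => rat_point hf hfpos hx hxy (r n) (hrpos n)
  have hth : t - h > 0 := by linarith
  have htpos : (0:ℝ) < t := by linarith
  have hcont1 : ContinuousAt f (t - h) :=
    (hf.1.contDiffAt (isOpen_Ioi.mem_nhds (by simpa using hth))).continuousAt
  have hcont2 : ContinuousAt f t :=
    (hf.1.contDiffAt (isOpen_Ioi.mem_nhds (by simpa using htpos))).continuousAt
  have e1 : x + ρ * h = t - h := by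
    rw [hρ]
    field_simp
    ring
  have e2 : y + ρ * h = t := by
    rw [hρ]
    field_simp
    ring
  have ht1 : Tendsto (fun n => x + (r n : ℝ) * h) atTop (nhds (t - h)) := by
    rw [← e1]
    exact tendsto_const_nhds.add (hrtend.mul_const h)
  have ht2 : Tendsto (fun n => y + (r n : ℝ) * h) atTop (nhds t) := by
    rw [← e2]
    exact tendsto_const_nhds.add (hrtend.mul_const h)
  have hT1 : Tendsto (fun n => f y * f (x + (r n : ℝ) * h)) atTop
      (nhds (f y * f (t - h))) :=
    tendsto_const_nhds.mul (hcont1.tendsto.comp ht1)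
  have hT2 : Tendsto (fun n => f x * f (y + (r n : ℝ) * h)) atTop
      (nhds (f x * f t)) :=
    tendsto_const_nhds.mul (hcont2.tendsto.comp ht2)
  exact le_of_tendsto_of_tendsto' hT1 hT2 hineq


/-- `f` is completely monotone on `(0, ∞)`. -/
def CompletelyMonotoneOn (f : ℝ → ℝ) : Prop :=
  ContDiffOn ℝ (⊤ : ℕ∞) f (Set.Ioi 0) ∧
  ∀ (k : ℕ), ∀ x ∈ Set.Ioi (0:ℝ),
    0 ≤ (-1 : ℝ) ^ k * iteratedDerivWithin k f (Set.Ioi 0) x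

theorem stmt_15 (f S : ℝ → ℝ)
    (hf : CompletelyMonotoneOn f)
    (hdens : ∫ t in Set.Ioi (0:ℝ), f t = 1)
    (hS : ∀ x, S x = ∫ t in Set.Ioi x, f t)
    (hSpos : ∀ x > (0:ℝ), 0 < S x) :
    AntitoneOn (fun x => f x / S x) (Set.Ioi 0) := by
  have hnice : Nice f := nice_of_cm hf.1 hf.2
  have hInt : IntegrableOn f (Set.Ioi 0) := by
    by_contra hc
    rw [integral_undef hc] at hdens
    norm_num at hdens
  have hf0 : ∀ x ∈ Set.Ioi (0:ℝ), 0 ≤ f x := fun x hx => by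
    simpa using hnice.2 0 x hx
  have hanti : AntitoneOn f (Set.Ioi 0) := by
    have := nice_antitone_alt hnice 0
    simp only [pow_zero, one_mul, iteratedDeriv_zero] at this
    exact this
  have hfpos : ∀ x > (0:ℝ), 0 < f x := by
    intro x hx
    rcases (hf0 x hx).lt_or_eq with hlt | heq
    · exact hlt
    exfalso
    have hzero : Set.EqOn f (fun _ => (0:ℝ)) (Set.Ioi x) := by
      intro t ht
      have h1 : f t ≤ f x := hanti (Set.mem_Ioi.mpr hx) (Set.mem_Ioi.mpr (lt_trans hx ht)) (le_of_lt ht)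
      have h2 : 0 ≤ f t := hf0 t (Set.mem_Ioi.mpr (lt_trans hx ht))
      simp only
      linarith [heq]
    have hS0 : S x = 0 := by
      rw [hS x, setIntegral_congr_fun measurableSet_Ioi hzero]
      simp
    linarith [hSpos x hx]
  intro x hx y hy hxy
  rcases eq_or_lt_of_le hxy with rfl | hlt
  · exact le_refl _
  simp only
  rw [Set.mem_Ioi] at hx hy
  rw [div_le_div_iff₀ (hSpos y hy) (hSpos x hx)]
  set h : ℝ := y - x with hh
  have emb : MeasurableEmbedding (fun u : ℝ => u + h) :=
    (MeasurableEquiv.addRight h).measurableEmbedding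
  have mp : MeasurePreserving (fun u : ℝ => u + h) volume volume :=
    measurePreserving_add_right volume h
  have hpre : (fun u : ℝ => u + h) ⁻¹' (Set.Ioi y) = Set.Ioi x := by
    ext u
    simp only [Set.mem_preimage, Set.mem_Ioi]
    constructor <;> intro hu <;> simp [hh] at * <;> linarith
  have hSx : S x = ∫ t in Set.Ioi y, f (t - h) := by
    rw [hS x]
    have key := mp.setIntegral_preimage_emb emb (fun t => f (t - h)) (Set.Ioi y)
    rw [hpre] at key
    simp only [add_sub_cancel_right] at key
    exact key
  have hIntx : IntegrableOn f (Set.Ioi x) := hInt.mono_set (Set.Ioi_subset_Ioi hx.le)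
  have hInty : IntegrableOn f (Set.Ioi y) := hInt.mono_set (Set.Ioi_subset_Ioi hy.le)
  have hi2 : IntegrableOn (fun t => f (t - h)) (Set.Ioi y) := by
    have key := (mp.restrict_preimage_emb emb (Set.Ioi y)).integrable_comp_emb
      (g := fun t : ℝ => f (t - h)) emb
    apply key.mp
    have e : ((fun t => f (t - h)) ∘ (fun u : ℝ => u + h)) = f := by
      funext u
      simp
    rw [e, hpre]
    exact hIntx
  have hpt : ∀ t ∈ Set.Ioi y, f y * f (t - h) ≤ f x * f t := by
    intro t ht
    rw [Set.mem_Ioi] at ht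
    exact four_point hnice hfpos hx hlt ht
  calc f y * S x = ∫ t in Set.Ioi y, f y * f (t - h) := by
        rw [hSx, integral_const_mul]
    _ ≤ ∫ t in Set.Ioi y, f x * f t :=
        setIntegral_mono_on (hi2.const_mul _) (hInty.const_mul _) measurableSet_Ioi hpt
    _ = f x * S y := by rw [hS y, integral_const_mul]
end
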